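/- Let (f, μ) be a Δ-feasible pair. Then there exists an optimal solution f* of the generalized flow maximization problem such that ‖f^μ − (f*)^μ‖_∞ ≤ Ex^μ(f) + (|F^μ| + 1)Δ, where F^μ is the set of non-tight arcs and Ex^μ(f) = Σ_{i≠t} e_i(f)/μ_i is the relabeled surplus. -/

import Mathlib

/-- Excess of node `i`. -/
def excess {V : Type*} [Fintype V] [DecidableEq V] (E : Finset (V × V))
    (γ : V × V → ℝ) (b : V → ℝ) (f : V × V → ℝ) (i : V) : ℝ :=
  (∑ a ∈ E.filter (fun a => a.2 = i), γ a * f a)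
    - (∑ a ∈ E.filter (fun a => a.1 = i), f a) - b i

/-- Flow entering `i` on non-tight arcs. -/
noncomputable def reserve {V : Type*} [Fintype V] [DecidableEq V] (E : Finset (V × V))
    (γ : V × V → ℝ) (μ : V → ℝ) (f : V × V → ℝ) (i : V) : ℝ :=
  ∑ a ∈ E.filter (fun a => a.2 = i ∧ γ a * μ a.1 < μ a.2), γ a * f a

/-- Primal feasibility for the uncapacitated problem. -/
def primalFeas {V : Type*} [Fintype V] [DecidableEq V] (E : Finset (V × V))
    (γ : V × V → ℝ) (b : V → ℝ) (t : V) (f : V × V → ℝ) : Prop :=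
  (∀ a, 0 ≤ f a) ∧ ∀ i, i ≠ t → 0 ≤ excess E γ b f i

/-!
Among the feasible flows supported on `E` that dominate a given feasible flow at `t`, take one,
`y`, closest to `f` in the relabeled ℓ¹ distance. Its residual graph relative to `f` (along arcs
where `y` exceeds `f`, against tight arcs where `y` falls short of `f`) is acyclic: relabeled gains
are at most one, and exactly one on tight arcs, so pushing a little flow around a cycle would bring
`y` closer to `f` without lowering any excess. Hence an arc on which `y` and `f` differ crosses a
set `A` of nodes closed under residual predecessors. In the relabeled excess difference of `f` and
`y` summed over `A`, every arc counts nonnegatively except non-tight arcs, each of which costs at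
most `Δ` by Δ-feasibility, and the crossing arc counts `|f^μ_a - y^μ_a|`; the sum is at most the
relabeled surplus of `f` because `y` is feasible and gains at `t`. (A non-tight arc with `y < f` is
bounded directly by `f^μ_a ≤ Δ`.) So the feasible flows supported on `E` within this distance of
`f^μ` form a compact set which dominates every feasible flow at `t`; a maximizer of the excess at
`t` over it is optimal.
-/

open Finset Relation Filter Topology

lemma exists_pos_forall_mul_le {ι : Type*} (s : Finset ι) (u w : ι → ℝ)
    (hw : ∀ a ∈ s, 0 < w a) : ∃ θ > 0, ∀ a ∈ s, θ * u a ≤ w a := by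
  have hev : ∀ᶠ θ in 𝓝[>] (0 : ℝ), ∀ a ∈ s, θ * u a ≤ w a := by
    refine (eventually_all_finset s).2 fun a ha => ?_
    have hlim : Tendsto (fun θ : ℝ => θ * u a) (𝓝[>] 0) (𝓝 0) :=
      ((continuous_mul_const _).tendsto' 0 0 (zero_mul _)).mono_left nhdsWithin_le_nhds
    exact hlim.eventually (eventually_le_nhds (hw a ha))
  obtain ⟨θ, h, hθ⟩ := (hev.and self_mem_nhdsWithin).exists
  exact ⟨θ, hθ, h⟩

lemma abs_sub_add_lt {x y d : ℝ} (hd : 0 < d * (x - y)) (hle : |d| ≤ |x - y|) :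
    |x - (y + d)| < |x - y| := by
  rcases pos_and_pos_or_neg_and_neg_of_mul_pos hd with ⟨hd, hxy⟩ | ⟨hd, hxy⟩
  · rw [abs_of_pos hd, abs_of_pos hxy] at hle
    rw [abs_of_pos hxy, abs_of_nonneg (by linarith)]
    linarith
  · rw [abs_of_neg hd, abs_of_neg hxy] at hle
    rw [abs_of_neg hxy, abs_of_nonpos (by linarith)]
    linarith

lemma add_nonneg_of_toward {x y d : ℝ} (hx : 0 ≤ x) (hy : 0 ≤ y) (hd : 0 < d * (x - y))
    (hle : |d| ≤ |x - y|) : 0 ≤ y + d := by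
  rcases pos_and_pos_or_neg_and_neg_of_mul_pos hd with ⟨hd, -⟩ | ⟨hd, hxy⟩
  · linarith
  · rw [abs_of_neg hd, abs_of_neg hxy] at hle
    linarith

lemma sub_card_filter_mul_le_sum {ι : Type*} (s : Finset ι) (c : ι → ℝ) (P : ι → Prop)
    [DecidablePred P] {Δ : ℝ} (hΔ : 0 ≤ Δ) (hc : ∀ a ∈ s, -(if P a then Δ else 0) ≤ c a) {a₀ : ι} (ha₀ : a₀ ∈ s) :
    c a₀ - #(s.filter P) * Δ ≤ ∑ a ∈ s, c a := by
  classical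
  have htotal : ∑ a ∈ s, (if P a then Δ else 0) = #(s.filter P) * Δ := by
    rw [← sum_filter, sum_const, nsmul_eq_mul]
  have hrest : ∑ a ∈ s.erase a₀, (if P a then Δ else 0) ≤ ∑ a ∈ s, (if P a then Δ else 0) :=
    sum_le_sum_of_subset_of_nonneg (erase_subset a₀ s) fun a _ _ => by positivity
  have hle : -∑ a ∈ s.erase a₀, (if P a then Δ else 0) ≤ ∑ a ∈ s.erase a₀, c a := by
    rw [← sum_neg_distrib]
    exact sum_le_sum fun a ha => hc a (mem_of_mem_erase ha)
  rw [← add_sum_erase s c ha₀]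
  linarith

lemma exists_predecessor_closed_of_acyclic {α : Type*} [Fintype α] {r : α → α → Prop}
    (hacyc : ∀ s, ¬TransGen r s s) {i j : α} (hij : r i j) :
    ∃ A : Finset α, i ∈ A ∧ j ∉ A ∧ ∀ k l, r k l → l ∈ A → k ∈ A := by
  classical
  refine ⟨univ.filter (ReflTransGen r · i), by simp [ReflTransGen.refl], fun hj => ?_,
    fun k l hkl hl => ?_⟩
  · exact hacyc i (TransGen.head' hij (mem_filter.1 hj).2)
  · exact mem_filter.2 ⟨mem_univ _, (mem_filter.1 hl).2.head hkl⟩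

section MovesToward

variable {α : Type*} {E : Finset α} {f y u v : α → ℝ}

def MovesToward (E : Finset α) (f y u : α → ℝ) : Prop :=
  ∀ a, u a ≠ 0 → a ∈ E ∧ 0 < u a * (f a - y a)

lemma MovesToward.mul_sub_nonneg (hu : MovesToward E f y u) (a : α) :
    0 ≤ u a * (f a - y a) := by
  by_cases h : u a = 0
  · simp [h]
  · exact (hu a h).2.le

lemma MovesToward.add (hu : MovesToward E f y u) (hv : MovesToward E f y v) :
    MovesToward E f y (u + v) := by
  intro a huv
  by_cases hua : u a = 0
  · simpa [hua] using hv a (by simpa [hua] using huv)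
  · obtain ⟨haE, hpos⟩ := hu a hua
    exact ⟨haE, by rw [Pi.add_apply, add_mul]; linarith [hv.mul_sub_nonneg a]⟩

lemma MovesToward.add_ne_zero (hu : MovesToward E f y u) (hv : MovesToward E f y v)
    (hu0 : u ≠ 0) : u + v ≠ 0 := by
  obtain ⟨a, ha⟩ := Function.ne_iff.1 hu0
  have hpos : 0 < (u + v) a * (f a - y a) := by
    rw [Pi.add_apply, add_mul]; linarith [(hu a ha).2, hv.mul_sub_nonneg a]
  intro h
  rw [h] at hpos
  simp at hpos

end MovesToward

section NetInflow

variable {V : Type*} [DecidableEq V]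

def netInflow (E : Finset (V × V)) (γ : V × V → ℝ) : (V × V → ℝ) →ₗ[ℝ] V → ℝ where
  toFun u i := (∑ a ∈ E.filter (fun a => a.2 = i), γ a * u a)
    - ∑ a ∈ E.filter (fun a => a.1 = i), u a
  map_add' u v := by
    ext i
    simp only [Pi.add_apply, mul_add, sum_add_distrib]
    ring
  map_smul' c u := by
    ext i
    simp only [Pi.smul_apply, smul_eq_mul, RingHom.id_apply, mul_sub, mul_sum, mul_left_comm]

lemma excess_eq_netInflow_sub [Fintype V] (E : Finset (V × V)) (γ : V × V → ℝ) (b : V → ℝ)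
    (f : V × V → ℝ) (i : V) : excess E γ b f i = netInflow E γ f i - b i := rfl

lemma netInflow_single {E : Finset (V × V)} (γ : V × V → ℝ) {a : V × V} (ha : a ∈ E) (c : ℝ)
    (k : V) : netInflow E γ (Pi.single a c) k
      = (if a.2 = k then γ a * c else 0) - if a.1 = k then c else 0 := by
  simp only [netInflow, LinearMap.coe_mk, AddHom.coe_mk, sum_filter, Pi.single_apply,
    mul_ite, mul_zero, ← ite_and, and_comm (a := _ = k)]
  simp only [ite_and, sum_ite_eq', ha, if_true]

lemma netInflow_indicator (E : Finset (V × V)) (γ : V × V → ℝ) (g : V × V → ℝ) :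
    netInflow E γ ((E : Set (V × V)).indicator g) = netInflow E γ g := by
  ext i
  simp only [netInflow, LinearMap.coe_mk, AddHom.coe_mk]
  congr 1 <;> refine sum_congr rfl fun a ha => ?_ <;>
    rw [Set.indicator_of_mem (by simpa using (mem_filter.1 ha).1)]

lemma continuous_excess [Fintype V] (E : Finset (V × V)) (γ : V × V → ℝ) (b : V → ℝ) (i : V) :
    Continuous fun h => excess E γ b h i := by
  simp only [excess_eq_netInflow_sub]
  exact ((continuous_apply i).comp (netInflow E γ).continuous_of_finiteDimensional).sub
    continuous_const

lemma isClosed_primalFeas [Fintype V] (E : Finset (V × V)) (γ : V × V → ℝ) (b : V → ℝ) (t : V) :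
    IsClosed {h | primalFeas E γ b t h} := by
  simp only [primalFeas, Set.ofPred_and, Set.ofPred_forall]
  exact (isClosed_iInter fun a => isClosed_le continuous_const (continuous_apply a)).inter
    (isClosed_iInter fun i => isClosed_iInter fun _ =>
      isClosed_le continuous_const (continuous_excess E γ b i))

end NetInflow

lemma isClosed_setOf_forall_notMem_eq_zero {α : Type*} (E : Finset α) :
    IsClosed {h : α → ℝ | ∀ a ∉ E, h a = 0} := by
  simp only [Set.ofPred_forall]
  exact isClosed_iInter fun a => isClosed_iInter fun _ =>
    isClosed_eq (continuous_apply a) continuous_const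

section RelDist

variable {V : Type*}

noncomputable def relDist (E : Finset (V × V)) (μ : V → ℝ) (f h : V × V → ℝ) : ℝ :=
  ∑ a ∈ E, |f a / μ a.1 - h a / μ a.1|

lemma continuous_relDist (E : Finset (V × V)) (μ : V → ℝ) (f : V × V → ℝ) :
    Continuous (relDist E μ f) := by
  unfold relDist
  fun_prop

def relBall (E : Finset (V × V)) (μ : V → ℝ) (f : V × V → ℝ) (R : ℝ) : Set (V × V → ℝ) :=
  {h | (∀ a ∉ E, h a = 0) ∧ ∀ a ∈ E, |f a / μ a.1 - h a / μ a.1| ≤ R}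

lemma isCompact_relBall {μ : V → ℝ} (E : Finset (V × V)) (f : V × V → ℝ) {R : ℝ}
    (hμ : ∀ i, 0 < μ i) (hR : 0 ≤ R) : IsCompact (relBall E μ f R) := by
  have hclosed : IsClosed (relBall E μ f R) := by
    have hnear : IsClosed {h : V × V → ℝ | ∀ a ∈ E, |f a / μ a.1 - h a / μ a.1| ≤ R} := by
      simp only [Set.ofPred_forall]
      exact isClosed_iInter fun a => isClosed_iInter fun _ =>
        isClosed_le (by fun_prop) continuous_const
    exact (isClosed_setOf_forall_notMem_eq_zero E).inter hnear
  refine (isCompact_univ_pi fun a => isCompact_Icc (a := -(|f a| + R * μ a.1))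
    (b := |f a| + R * μ a.1)).of_isClosed_subset hclosed fun h ⟨hsupp, hnear⟩ a _ => ?_
  rw [Set.mem_Icc, ← abs_le]
  by_cases ha : a ∈ E
  · have hdist := hnear a ha
    rw [div_sub_div_same, abs_div, abs_of_pos (hμ a.1), div_le_iff₀ (hμ a.1)] at hdist
    calc |h a| = |f a - (f a - h a)| := by ring_nf
      _ ≤ |f a| + |f a - h a| := abs_sub _ _
      _ ≤ |f a| + R * μ a.1 := by linarith
  · rw [hsupp a ha, abs_zero]
    have := hμ a.1
    positivity

end RelDist

section Augmentation

variable {V : Type*} [DecidableEq V] {E : Finset (V × V)} {γ : V × V → ℝ} {μ : V → ℝ}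
  {f y : V × V → ℝ}

/-- Steps of the residual graph of `y` relative to `f`: `y` can be moved toward `f` by lowering it
on the arc `ij`, or by raising it on the tight arc `ji`. -/
def Residual (E : Finset (V × V)) (γ : V × V → ℝ) (μ : V → ℝ) (f y : V × V → ℝ) (i j : V) :
    Prop :=
  ((i, j) ∈ E ∧ f (i, j) < y (i, j)) ∨ ((j, i) ∈ E ∧ y (j, i) < f (j, i) ∧ μ i ≤ γ (j, i) * μ j)

lemma movesToward_single {a : V × V} (ha : a ∈ E) {c : ℝ} (hc : 0 < c * (f a - y a)) :
    MovesToward E f y (Pi.single a c) := by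
  intro a' h
  obtain rfl : a' = a := by by_contra hne; simp [hne] at h
  simpa using ⟨ha, hc⟩

lemma exists_augmentation_of_residual (hμ : ∀ i, 0 < μ i)
    (hdual : ∀ a ∈ E, γ a * μ a.1 ≤ μ a.2) {i j : V} (h : Residual E γ μ f y i j) :
    ∃ u, MovesToward E f y u ∧ u ≠ 0 ∧
      Pi.single i (μ i) - Pi.single j (μ j) ≤ netInflow E γ u := by
  have hμi := hμ i
  have hμj := hμ j
  rcases h with ⟨hE, hlt⟩ | ⟨hE, hlt, htight⟩
  · have hd : γ (i, j) * μ i ≤ μ j := hdual _ hE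
    refine ⟨Pi.single (i, j) (-μ i), movesToward_single hE (by nlinarith), by simp [hμi.ne'],
      fun k => ?_⟩
    simp only [Pi.sub_apply, Pi.single_apply, netInflow_single γ hE]
    split_ifs <;> subst_vars <;> first | contradiction | linarith
  · refine ⟨Pi.single (j, i) (μ j), movesToward_single hE (by nlinarith), by simp [hμj.ne'],
      fun k => ?_⟩
    simp only [Pi.sub_apply, Pi.single_apply, netInflow_single γ hE]
    split_ifs <;> subst_vars <;> first | contradiction | linarith

lemma exists_augmentation_of_transGen (hμ : ∀ i, 0 < μ i)
    (hdual : ∀ a ∈ E, γ a * μ a.1 ≤ μ a.2) {i j : V} (h : TransGen (Residual E γ μ f y) i j) :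
    ∃ u, MovesToward E f y u ∧ u ≠ 0 ∧
      Pi.single i (μ i) - Pi.single j (μ j) ≤ netInflow E γ u := by
  induction h with
  | single h => exact exists_augmentation_of_residual hμ hdual h
  | @tail k j _ hstep ih =>
    obtain ⟨u, hu, hu0, hgain⟩ := ih
    obtain ⟨v, hv, -, hgain'⟩ := exists_augmentation_of_residual hμ hdual hstep
    refine ⟨u + v, hu.add hv, hu.add_ne_zero hv hu0, ?_⟩
    calc Pi.single i (μ i) - Pi.single j (μ j)
        = (Pi.single i (μ i) - Pi.single k (μ k)) + (Pi.single k (μ k) - Pi.single j (μ j)) := by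
          abel
      _ ≤ netInflow E γ u + netInflow E γ v := add_le_add hgain hgain'
      _ = netInflow E γ (u + v) := (map_add _ _ _).symm

lemma exists_improvement_of_cycle (hμ : ∀ i, 0 < μ i)
    (hdual : ∀ a ∈ E, γ a * μ a.1 ≤ μ a.2) (hf0 : ∀ a, 0 ≤ f a) (hy0 : ∀ a, 0 ≤ y a)
    (hyE : ∀ a ∉ E, y a = 0) {s : V} (hcyc : TransGen (Residual E γ μ f y) s s) :
    ∃ y', (∀ a, 0 ≤ y' a) ∧ (∀ a ∉ E, y' a = 0) ∧ netInflow E γ y ≤ netInflow E γ y' ∧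
      relDist E μ f y' < relDist E μ f y := by
  obtain ⟨u, hu, hu0, hgain⟩ := exists_augmentation_of_transGen hμ hdual hcyc
  obtain ⟨θ, hθ, hθu⟩ := exists_pos_forall_mul_le (E.filter (u · ≠ 0)) (|u ·|)
    (fun a => |f a - y a|) fun a ha => abs_pos.2 (sub_ne_zero.2 fun h => by
      simpa [h] using (hu a (mem_filter.1 ha).2).2)
  have hstep : ∀ a, u a ≠ 0 → 0 < (θ • u) a * (f a - y a) ∧ |(θ • u) a| ≤ |f a - y a| :=
    fun a ha => ⟨by simpa [mul_assoc] using mul_pos hθ (hu a ha).2,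
      by simpa [abs_mul, abs_of_pos hθ] using hθu a (mem_filter.2 ⟨(hu a ha).1, ha⟩)⟩
  have hcloser : ∀ a, u a ≠ 0 →
      |f a / μ a.1 - (y + θ • u) a / μ a.1| < |f a / μ a.1 - y a / μ a.1| := fun a ha => by
    simp only [div_sub_div_same, abs_div, abs_of_pos (hμ a.1)]
    exact div_lt_div_of_pos_right (abs_sub_add_lt (hstep a ha).1 (hstep a ha).2) (hμ a.1)
  refine ⟨y + θ • u, fun a => ?_, fun a ha => ?_, ?_, ?_⟩
  · by_cases ha : u a = 0
    · simp [ha, hy0 a]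
    · exact add_nonneg_of_toward (hf0 a) (hy0 a) (hstep a ha).1 (hstep a ha).2
  · have : u a = 0 := by by_contra h; exact ha (hu a h).1
    simp [this, hyE a ha]
  · have hu_nonneg : 0 ≤ netInflow E γ u := by simpa using hgain
    rw [map_add, map_smul]
    exact le_add_of_nonneg_right (smul_nonneg hθ.le hu_nonneg)
  · obtain ⟨a, ha⟩ := Function.ne_iff.1 hu0
    refine sum_lt_sum (fun a _ => ?_) ⟨a, (hu a ha).1, hcloser a ha⟩
    by_cases ha : u a = 0
    · simp [ha]
    · exact (hcloser a ha).le

end Augmentation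

section Cut

variable {V : Type*} [DecidableEq V] {E : Finset (V × V)} {γ : V × V → ℝ} {μ : V → ℝ}
  {f y : V × V → ℝ} {Δ : ℝ}

noncomputable def cutInflow (γ : V × V → ℝ) (μ : V → ℝ) (A : Finset V) (w : V × V → ℝ)
    (a : V × V) : ℝ :=
  (if a.2 ∈ A then γ a * w a / μ a.2 else 0) - if a.1 ∈ A then w a / μ a.1 else 0

lemma sum_netInflow_div_eq (A : Finset V) (w : V × V → ℝ) :
    ∑ i ∈ A, netInflow E γ w i / μ i = ∑ a ∈ E, cutInflow γ μ A w a := by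
  have hnode : ∀ i, netInflow E γ w i / μ i = ∑ a ∈ E,
      ((if a.2 = i then γ a * w a / μ a.2 else 0) - if a.1 = i then w a / μ a.1 else 0) := by
    intro i
    simp only [netInflow, LinearMap.coe_mk, AddHom.coe_mk, sub_div, sum_div, sum_sub_distrib,
      sum_filter]
    congr 1 <;> refine sum_congr rfl fun a _ => ?_ <;> split_ifs with h <;> simp [h]
  rw [sum_congr rfl fun i _ => hnode i, sum_comm]
  simp only [cutInflow, sum_sub_distrib, sum_ite_eq]

lemma neg_ite_le_cutInflow (hμ : ∀ i, 0 < μ i) (hΔ : 0 ≤ Δ) {A : Finset V}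
    (hA : ∀ i j, Residual E γ μ f y i j → j ∈ A → i ∈ A) {a : V × V} (ha : a ∈ E)
    (hγ : 0 ≤ γ a) (hdual : γ a * μ a.1 ≤ μ a.2) (hfat : Δ < f a / μ a.1 → μ a.2 ≤ γ a * μ a.1)
    (hy : 0 ≤ y a) :
    -(if γ a * μ a.1 < μ a.2 then Δ else 0) ≤ cutInflow γ μ A (f - y) a := by
  have hμ1 := hμ a.1
  have hμ2 := hμ a.2
  have hpenalty : -(if γ a * μ a.1 < μ a.2 then Δ else 0) ≤ 0 := by split_ifs <;> linarith
  simp only [cutInflow, Pi.sub_apply]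
  rcases lt_trichotomy (f a) (y a) with hlt | heq | hgt
  · have hfwd : a.2 ∈ A → a.1 ∈ A := hA _ _ (Or.inl ⟨ha, hlt⟩)
    have hflow : (f a - y a) / μ a.1 ≤ γ a * (f a - y a) / μ a.2 := by
      rw [div_le_div_iff₀ hμ1 hμ2]; nlinarith
    have htail : (f a - y a) / μ a.1 ≤ 0 := div_nonpos_of_nonpos_of_nonneg (by linarith) hμ1.le
    by_cases h2 : a.2 ∈ A <;> simp only [h2, hfwd, if_true, if_false] <;> split_ifs <;> linarith
  · simp [heq, hpenalty]
  · by_cases htight : μ a.2 ≤ γ a * μ a.1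
    · have hbwd : a.1 ∈ A → a.2 ∈ A := hA _ _ (Or.inr ⟨ha, hgt, htight⟩)
      have hflow : γ a * (f a - y a) / μ a.2 = (f a - y a) / μ a.1 := by
        rw [div_eq_div_iff hμ2.ne' hμ1.ne', le_antisymm htight hdual]; ring
      have hhead : 0 ≤ (f a - y a) / μ a.1 := div_nonneg (by linarith) hμ1.le
      by_cases h1 : a.1 ∈ A <;> simp only [h1, hbwd, if_true, if_false] <;> split_ifs <;>
        linarith
    · have hsmall : (f a - y a) / μ a.1 ≤ Δ :=
        (div_le_div_of_nonneg_right (by linarith) hμ1.le).trans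
          (not_lt.1 fun h => htight (hfat h))
      have hhead : 0 ≤ γ a * (f a - y a) / μ a.2 :=
        div_nonneg (mul_nonneg hγ (by linarith)) hμ2.le
      rw [if_pos (not_le.1 htight)]
      split_ifs <;> linarith

end Cut

section Proximity

variable {V : Type*} [Fintype V] [DecidableEq V] {E : Finset (V × V)} {γ : V × V → ℝ}
  {b : V → ℝ} {t : V} {μ : V → ℝ} {f g y : V × V → ℝ} {Δ : ℝ}

lemma sum_excess_div_nonneg (hμ : ∀ i, 0 < μ i) (hf : primalFeas E γ b t f) :
    0 ≤ ∑ i ∈ univ.erase t, excess E γ b f i / μ i :=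
  sum_nonneg fun i hi => div_nonneg (hf.2 i (ne_of_mem_erase hi)) (hμ i).le

lemma sum_netInflow_sub_div_le (hμ : ∀ i, 0 < μ i) (hf : primalFeas E γ b t f)
    (hy : primalFeas E γ b t y) (hyt : excess E γ b f t ≤ excess E γ b y t) (A : Finset V) :
    ∑ i ∈ A, netInflow E γ (f - y) i / μ i ≤ ∑ i ∈ univ.erase t, excess E γ b f i / μ i := by
  have hnode : ∀ i,
      netInflow E γ (f - y) i / μ i ≤ if i ≠ t then excess E γ b f i / μ i else 0 := by
    intro i
    have hdiff : netInflow E γ (f - y) i = excess E γ b f i - excess E γ b y i := by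
      simp [excess_eq_netInflow_sub]
    rw [hdiff]
    split_ifs with hi
    · exact div_le_div_of_nonneg_right (by linarith [hy.2 i hi]) (hμ i).le
    · exact div_nonpos_of_nonpos_of_nonneg (by linarith [not_not.1 hi ▸ hyt]) (hμ i).le
  calc ∑ i ∈ A, netInflow E γ (f - y) i / μ i
      ≤ ∑ i ∈ A, (if i ≠ t then excess E γ b f i / μ i else 0) := sum_le_sum fun i _ => hnode i
    _ ≤ ∑ i, (if i ≠ t then excess E γ b f i / μ i else 0) :=
        sum_le_sum_of_subset_of_nonneg (subset_univ A) fun i _ _ => by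
          split_ifs with hi
          · exact div_nonneg (hf.2 i hi) (hμ i).le
          · rfl
    _ = ∑ i ∈ univ.erase t, excess E γ b f i / μ i := by rw [← sum_filter, filter_ne']

lemma cutInflow_le (hμ : ∀ i, 0 < μ i) (hγ : ∀ a ∈ E, 0 ≤ γ a)
    (hdual : ∀ a ∈ E, γ a * μ a.1 ≤ μ a.2) (hΔ : 0 ≤ Δ)
    (hfat : ∀ a ∈ E, Δ < f a / μ a.1 → μ a.2 ≤ γ a * μ a.1) (hf : primalFeas E γ b t f)
    (hy : primalFeas E γ b t y) (hyt : excess E γ b f t ≤ excess E γ b y t) {a₀ : V × V}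
    (ha₀ : a₀ ∈ E) (A : Finset V) (hA : ∀ i j, Residual E γ μ f y i j → j ∈ A → i ∈ A) :
    cutInflow γ μ A (f - y) a₀ ≤ (∑ i ∈ univ.erase t, excess E γ b f i / μ i)
      + #(E.filter fun a => γ a * μ a.1 < μ a.2) * Δ := by
  have hlower := sub_card_filter_mul_le_sum E (cutInflow γ μ A (f - y)) _ hΔ
    (fun a ha => neg_ite_le_cutInflow hμ hΔ hA ha (hγ a ha) (hdual a ha) (hfat a ha) (hy.1 a))
    ha₀
  have hupper := sum_netInflow_sub_div_le hμ hf hy hyt A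
  rw [sum_netInflow_div_eq] at hupper
  linarith

lemma abs_div_sub_div_le_of_acyclic (hμ : ∀ i, 0 < μ i) (hγ : ∀ a ∈ E, 0 ≤ γ a)
    (hdual : ∀ a ∈ E, γ a * μ a.1 ≤ μ a.2) (hΔ : 0 ≤ Δ)
    (hfat : ∀ a ∈ E, Δ < f a / μ a.1 → μ a.2 ≤ γ a * μ a.1) (hf : primalFeas E γ b t f)
    (hy : primalFeas E γ b t y) (hyt : excess E γ b f t ≤ excess E γ b y t)
    (hacyc : ∀ s, ¬TransGen (Residual E γ μ f y) s s) {a : V × V} (ha : a ∈ E) :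
    |f a / μ a.1 - y a / μ a.1| ≤ (∑ i ∈ univ.erase t, excess E γ b f i / μ i)
      + (#(E.filter fun a => γ a * μ a.1 < μ a.2) + 1) * Δ := by
  have hμ1 := hμ a.1
  have hsurplus := sum_excess_div_nonneg hμ hf
  have hnontight : 0 ≤ (#(E.filter fun a => γ a * μ a.1 < μ a.2) : ℝ) * Δ := by positivity
  have hcut := cutInflow_le hμ hγ hdual hΔ hfat hf hy hyt ha
  rw [div_sub_div_same, abs_div, abs_of_pos hμ1]
  rcases lt_trichotomy (f a) (y a) with hlt | heq | hgt
  · obtain ⟨A, h1, h2, hA⟩ := exists_predecessor_closed_of_acyclic hacyc (Or.inl ⟨ha, hlt⟩)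
    have := hcut A hA
    simp only [cutInflow, h1, h2, if_true, if_false, Pi.sub_apply] at this
    rw [abs_of_neg (by linarith), neg_div]
    linarith
  · simp only [heq, sub_self, abs_zero, zero_div]
    positivity
  · by_cases htight : μ a.2 ≤ γ a * μ a.1
    · obtain ⟨A, h2, h1, hA⟩ :=
        exists_predecessor_closed_of_acyclic hacyc (Or.inr ⟨ha, hgt, htight⟩)
      have := hcut A hA
      have hflow : γ a * (f a - y a) / μ a.2 = (f a - y a) / μ a.1 := by
        rw [div_eq_div_iff (hμ a.2).ne' hμ1.ne', le_antisymm htight (hdual a ha)]; ring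
      simp only [cutInflow, h1, h2, if_true, if_false, Pi.sub_apply, hflow] at this
      rw [abs_of_pos (by linarith)]
      linarith
    · have hsmall : f a / μ a.1 ≤ Δ := not_lt.1 fun h => htight (hfat a ha h)
      have : (f a - y a) / μ a.1 ≤ f a / μ a.1 :=
        div_le_div_of_nonneg_right (by linarith [hy.1 a]) hμ1.le
      rw [abs_of_pos (by linarith)]
      linarith

lemma exists_dominating_acyclic (hμ : ∀ i, 0 < μ i) (hdual : ∀ a ∈ E, γ a * μ a.1 ≤ μ a.2)
    (hf0 : ∀ a, 0 ≤ f a) (hg : primalFeas E γ b t g) :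
    ∃ y, primalFeas E γ b t y ∧ (∀ a ∉ E, y a = 0) ∧ excess E γ b g t ≤ excess E γ b y t ∧
      ∀ s, ¬TransGen (Residual E γ μ f y) s s := by
  set S := {h | primalFeas E γ b t h ∧ (∀ a ∉ E, h a = 0) ∧
    excess E γ b g t ≤ excess E γ b h t}
  set g₀ := (E : Set (V × V)).indicator g
  have hexcess₀ : ∀ i, excess E γ b g₀ i = excess E γ b g i := fun i => by
    simp only [excess_eq_netInflow_sub, g₀, netInflow_indicator]
  have hg₀ : g₀ ∈ S := ⟨⟨fun a => Set.indicator_nonneg (fun a _ => hg.1 a) a,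
      fun i hi => hexcess₀ i ▸ hg.2 i hi⟩,
    fun a ha => Set.indicator_of_notMem (by simpa using ha) g, (hexcess₀ t).ge⟩
  set R := relDist E μ f g₀
  have hT : IsCompact (S ∩ {h | relDist E μ f h ≤ R}) := by
    refine (isCompact_relBall E f hμ (sum_nonneg fun a _ => abs_nonneg _)).of_isClosed_subset
      ?_ fun h ⟨⟨_, hsupp, _⟩, hdist⟩ => ⟨hsupp, fun a ha => (single_le_sum
        (f := fun a => |f a / μ a.1 - h a / μ a.1|) (fun _ _ => abs_nonneg _) ha).trans hdist⟩
    exact (isClosed_primalFeas E γ b t).inter ((isClosed_setOf_forall_notMem_eq_zero E).inter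
        (isClosed_le continuous_const (continuous_excess E γ b t))) |>.inter
      (isClosed_le (continuous_relDist E μ f) continuous_const)
  obtain ⟨y, ⟨hyS, hyR⟩, hmin⟩ :=
    hT.exists_isMinOn ⟨g₀, hg₀, le_refl R⟩ (continuous_relDist E μ f).continuousOn
  refine ⟨y, hyS.1, hyS.2.1, hyS.2.2, fun s hcyc => ?_⟩
  obtain ⟨y', hy'0, hy'E, hdom, hlt⟩ :=
    exists_improvement_of_cycle hμ hdual hf0 hyS.1.1 hyS.2.1 hcyc
  have hexcess : ∀ i, excess E γ b y i ≤ excess E γ b y' i := fun i => by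
    simp only [excess_eq_netInflow_sub]; linarith [hdom i]
  have hy'S : y' ∈ S := ⟨⟨hy'0, fun i hi => (hyS.1.2 i hi).trans (hexcess i)⟩, hy'E,
    hyS.2.2.trans (hexcess t)⟩
  exact (hmin ⟨hy'S, hlt.le.trans hyR⟩).not_gt hlt

lemma exists_near_dominating (hμ : ∀ i, 0 < μ i) (hγ : ∀ a ∈ E, 0 ≤ γ a)
    (hdual : ∀ a ∈ E, γ a * μ a.1 ≤ μ a.2) (hΔ : 0 ≤ Δ)
    (hfat : ∀ a ∈ E, Δ < f a / μ a.1 → μ a.2 ≤ γ a * μ a.1) (hf : primalFeas E γ b t f)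
    (hg : primalFeas E γ b t g) (hfg : excess E γ b f t ≤ excess E γ b g t) :
    ∃ y, primalFeas E γ b t y ∧ excess E γ b g t ≤ excess E γ b y t ∧
      y ∈ relBall E μ f ((∑ i ∈ univ.erase t, excess E γ b f i / μ i)
        + (#(E.filter fun a => γ a * μ a.1 < μ a.2) + 1) * Δ) := by
  obtain ⟨y, hy, hyE, hgy, hacyc⟩ := exists_dominating_acyclic hμ hdual hf.1 hg
  exact ⟨y, hy, hgy, hyE,
    fun a ha => abs_div_sub_div_le_of_acyclic hμ hγ hdual hΔ hfat hf hy (hfg.trans hgy) hacyc ha⟩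

end Proximity

theorem proximity_to_optimal_general {V : Type*} [Fintype V] [DecidableEq V]
    (E : Finset (V × V)) (γ : V × V → ℝ) (b : V → ℝ) (t : V)
    (f : V × V → ℝ) (μ : V → ℝ) (Δ : ℝ) (hΔ : 0 ≤ Δ)
    (hγ : ∀ a ∈ E, 0 < γ a)
    -- Δ-feasibility of (f, μ):
    (hf0 : ∀ a, 0 ≤ f a)
    (hμt : μ t = 1) (hμpos : ∀ i, i ≠ t → 0 < μ i)
    (hdual : ∀ a ∈ E, γ a * μ a.1 ≤ μ a.2)
    (hfat : ∀ a ∈ E, Δ < f a / μ a.1 → μ a.2 ≤ γ a * μ a.1)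
    (hres : ∀ i, i ≠ t → reserve E γ μ f i ≤ excess E γ b f i) :
    ∃ fs : V × V → ℝ,
      (primalFeas E γ b t fs ∧
        ∀ g, primalFeas E γ b t g → excess E γ b g t ≤ excess E γ b fs t) ∧
      ∀ a ∈ E, |f a / μ a.1 - fs a / μ a.1|
          ≤ (∑ i ∈ Finset.univ.erase t, excess E γ b f i / μ i)
            + (((E.filter (fun a => γ a * μ a.1 < μ a.2)).card : ℝ) + 1) * Δ := by
  have hμ : ∀ i, 0 < μ i := fun i => by
    by_cases hi : i = t
    · simp [hi, hμt]
    · exact hμpos i hi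
  have hγ0 : ∀ a ∈ E, 0 ≤ γ a := fun a ha => (hγ a ha).le
  have hf : primalFeas E γ b t f := ⟨hf0, fun i hi => le_trans
    (sum_nonneg fun a ha => mul_nonneg (hγ0 a (mem_filter.1 ha).1) (hf0 a)) (hres i hi)⟩
  set B := (∑ i ∈ univ.erase t, excess E γ b f i / μ i)
    + (#(E.filter fun a => γ a * μ a.1 < μ a.2) + 1) * Δ
  have hB : 0 ≤ B := add_nonneg (sum_excess_div_nonneg hμ hf) (by positivity)
  have hdom := fun g => exists_near_dominating hμ hγ0 hdual hΔ hfat hf (g := g)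
  obtain ⟨y₀, hy₀, hfy₀, hy₀B⟩ := hdom f hf le_rfl
  obtain ⟨fs, ⟨hfs, hfsB⟩, hmax⟩ := ((isCompact_relBall E f hμ hB).inter_left
    (isClosed_primalFeas E γ b t)).exists_isMaxOn ⟨y₀, hy₀, hy₀B⟩
    (continuous_excess E γ b t).continuousOn
  refine ⟨fs, ⟨hfs, fun g hg => ?_⟩, hfsB.2⟩
  rcases le_total (excess E γ b f t) (excess E γ b g t) with hfg | hgf
  · obtain ⟨y, hy, hgy, hyB⟩ := hdom g hg hfg
    exact hgy.trans (hmax ⟨hy, hyB⟩)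
  · exact hgf.trans (hfy₀.trans (hmax ⟨hy₀, hy₀B⟩))

/-- proximity of a Δ-feasible pair to an optimal solution:
there is an optimal f* with ‖f^μ − (f*)^μ‖_∞ ≤ Ex^μ(f) + (|F^μ| + 1)Δ. -/
theorem proximity_to_optimal {V : Type*} [Fintype V] [DecidableEq V]
    (E : Finset (V × V)) (γ : V × V → ℝ) (b : V → ℝ) (t : V)
    (f : V × V → ℝ) (μ : V → ℝ) (Δ : ℝ) (hΔ : 0 ≤ Δ)
    (hγ : ∀ a ∈ E, 0 < γ a)
    -- every node has an arc to the sink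
    (hstar : ∀ i, i ≠ t → (i, t) ∈ E)
    -- the objective is bounded
    (hbdd : ∃ M : ℝ, ∀ g, primalFeas E γ b t g → excess E γ b g t ≤ M)
    -- Δ-feasibility of (f, μ):
    (hf0 : ∀ a, 0 ≤ f a) (hfE : ∀ a ∉ E, f a = 0)
    (hμt : μ t = 1) (hμpos : ∀ i, i ≠ t → 0 < μ i)
    (hdual : ∀ a ∈ E, γ a * μ a.1 ≤ μ a.2)
    (hfat : ∀ a ∈ E, Δ < f a / μ a.1 → μ a.2 ≤ γ a * μ a.1)
    (hres : ∀ i, i ≠ t → reserve E γ μ f i ≤ excess E γ b f i) :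
    ∃ fs : V × V → ℝ,
      (primalFeas E γ b t fs ∧
        ∀ g, primalFeas E γ b t g → excess E γ b g t ≤ excess E γ b fs t) ∧
      ∀ a ∈ E, |f a / μ a.1 - fs a / μ a.1|
          ≤ (∑ i ∈ Finset.univ.erase t, excess E γ b f i / μ i)
            + (((E.filter (fun a => γ a * μ a.1 < μ a.2)).card : ℝ) + 1) * Δ :=
  proximity_to_optimal_general E γ b t f μ Δ hΔ hγ hf0 hμt hμpos hdual hfat hres
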